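/- arXiv:1106.2915 — 2 statements merged into one kernel-verified Lean document; each statement's English description precedes it below -/
import Mathlib

section
/- With π and Φ as above (Φ(μ) = φ^{(π(μ))}(μ)), the matrix (⟨V_{ι(λ)}(A), V̄_{Φ(μ)}(A)⟩)_{λ,μ ∈ Z_{s,n}} is block upper triangular with respect to the filtration by max part, and its determinant equals ± ∏_{μ ∈ Z_{s,n}} det A_{ι(μ) ⊔ Φ(μ)}. -/
open Finset

/-- The minor of `A` on the rows `I` and columns `J` (listed increasingly);
junk value `0` if `I` and `J` have different sizes. -/
def minor {R : Type*} [CommRing R] {N M : ℕ} (A : Matrix (Fin N) (Fin M) R)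
    (I : Finset (Fin N)) (J : Finset (Fin M)) : R :=
  if h : J.card = I.card then
    (A.submatrix (I.orderEmbOfFin rfl) (J.orderEmbOfFin h)).det
  else 0

/-- `ι(μ) = ⊔_i {(i−1)n+1, …, (i−1)n+μ_i} ⊆ [sn]` (here `0`-based). -/
def iotaSet (s n : ℕ) (μ : Fin s → ℕ) : Finset (Fin (s * n)) :=
  Finset.univ.filter fun x =>
    (x : ℕ) % n < if h : (x : ℕ) / n < s then μ ⟨(x : ℕ) / n, h⟩ else 0

/-- `φ^{(k)}(μ) = {(i−1)n + μ_i + 1 : i ≠ k} ⊆ [sn]` (here `0`-based). -/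
def phiSet (s n : ℕ) (k : Fin s) (μ : Fin s → ℕ) : Finset (Fin (s * n)) :=
  Finset.univ.filter fun x =>
    (x : ℕ) / n ≠ (k : ℕ) ∧
      ((x : ℕ) % n) = (if h : (x : ℕ) / n < s then μ ⟨(x : ℕ) / n, h⟩ else n)

/-- `ε(J,K)`: the sign of the permutation sorting the concatenation of `J` and
`K`, and `0` if `J ∩ K ≠ ∅`. -/
def eps {α : Type*} [LinearOrder α] (J K : Finset α) : ℤ :=
  if Disjoint J K then (-1) ^ ((J ×ˢ K).filter fun p => p.2 < p.1).card else 0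

/-- The sign `(−1)^{|I| − n(n+1)/2}` (written with the same parity as
`|I| + n(n+1)/2`, where `|I|` is the sum of the (1-based) elements of `I`). -/
def vSign {N : ℕ} (n : ℕ) (I : Finset (Fin N)) : ℤ :=
  (-1) ^ ((∑ i ∈ I, ((i : ℕ) + 1)) + n * (n + 1) / 2)

/-- The inner product `⟨V_J(A), V̄_K(A)⟩ = ∑_{I ∈ ([s+n−1] choose n)}
(det A^I_J) · (−1)^{|I|−n(n+1)/2} (det A^{Ī}_K)`. -/
noncomputable def innerVV {R : Type*} [CommRing R] {s n : ℕ}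
    (A : Matrix (Fin (s + n - 1)) (Fin (s * n)) R)
    (J K : Finset (Fin (s * n))) : R :=
  ∑ I : {I : Finset (Fin (s + n - 1)) // I.card = n},
    minor A I.1 J * (((vSign n I.1 : ℤ) : R) * minor A (I.1)ᶜ K)

/-- The set of "star positions" of `μ ∈ Z_{s,n}` in the stars-and-bars word:
this is the order isomorphism `Z_{s,n} ≅ ([s+n−1] choose n)` matching the
lexicographic orderings used for the rows and columns of `M(A)`. -/
def starPos (s n : ℕ) (μ : Fin s → ℕ) : Finset (Fin (s + n - 1)) :=
  Finset.univ.filter fun p => ∃ i : Fin s,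
    (∑ l ∈ Finset.univ.filter (· < i), μ l) + (i : ℕ) ≤ (p : ℕ) ∧
      (p : ℕ) < (∑ l ∈ Finset.univ.filter (· ≤ i), μ l) + (i : ℕ)

/-- `Z_{s,n}`, the compositions of `n` into `s` nonnegative parts, as a type. -/
abbrev Comp (s n : ℕ) := {μ : Fin s → ℕ // μ ∈ Finset.Nat.antidiagonalTuple s n}

/-- The matrix `M(A) = (det A^I_{ι(μ)})_{I,μ}`, with rows indexed through the
order isomorphism `starPos` (i.e. rows and columns in lexicographic order). -/
noncomputable def Mmat {R : Type*} [CommRing R] (s n : ℕ)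
    (A : Matrix (Fin (s + n - 1)) (Fin (s * n)) R) :
    Matrix (Comp s n) (Comp s n) R :=
  Matrix.of fun ρ μ => minor A (starPos s n ρ.1) (iotaSet s n μ.1)

/-- The matrix `M̂(Φ,A) = ((−1)^{|I|−n(n+1)/2} det A^{Ī}_{Φ(μ)})_{I,μ}`, rows
indexed through `starPos` as in `Mmat`. -/
noncomputable def Mhat {R : Type*} [CommRing R] (s n : ℕ)
    (A : Matrix (Fin (s + n - 1)) (Fin (s * n)) R)
    (Φ : (Fin s → ℕ) → Finset (Fin (s * n))) :
    Matrix (Comp s n) (Comp s n) R :=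
  Matrix.of fun ρ μ =>
    ((vSign n (starPos s n ρ.1) : ℤ) : R) * minor A (starPos s n ρ.1)ᶜ (Φ μ.1)

/-!
Laplace expansion along the first `n` columns identifies `⟨V_J(A), V̄_K(A)⟩`, for `|J| = n` and
`|K| = s - 1`, with the determinant of the square matrix formed by the columns of `A` indexed by
`J` followed by those indexed by `K`; the sign `(−1)^{|I|−n(n+1)/2}` is the sign of the
permutation listing `I` and then `Iᶜ` increasingly. Hence the pairing vanishes when `J ∩ K ≠ ∅`
and equals `± det A_{J ⊔ K}` when `J` and `K` are disjoint. Now `ι(μ)` and `Φ(μ)` are disjoint,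
while for `λ ≠ μ` with `max λ ≤ max μ` the sets `ι(λ)` and `Φ(μ)` meet: otherwise `λ_i ≤ μ_i`
for all `i` (at `i = π(μ)` because `μ_{π(μ)} = max μ`), which forces `λ = μ` since both sum to
`n`. So the matrix is triangular for any linear order refining the reversed maximal part, and its
determinant is the product of its diagonal entries.
-/

open Equiv

theorem Finset.orderEmbOfFin_apply_of_eq_map {α β : Type*} [LinearOrder α] [LinearOrder β]
    {s : Finset α} {t : Finset β} {k : ℕ} (g : α ↪ β) (hg : StrictMonoOn g s)
    (ht : t = s.map g) (h : t.card = k) (j : Fin k) :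
    t.orderEmbOfFin h j = g (s.orderEmbOfFin ((card_map g).symm.trans (ht ▸ h)) j) := by
  subst ht
  refine (congrFun (orderEmbOfFin_unique h (fun j => mem_map_of_mem g (orderEmbOfFin_mem _ _ j))
    fun i j hij => hg (orderEmbOfFin_mem _ _ i) (orderEmbOfFin_mem _ _ j)
      ((orderEmbOfFin _ _).strictMono hij)) j).symm

theorem strictMonoOn_swap_of_val_add_one_eq {m : ℕ} {b a : Fin m} (hab : (b : ℕ) + 1 = a)
    {s : Set (Fin m)} (hs : ¬(b ∈ s ∧ a ∈ s)) : StrictMonoOn (swap b a) s := by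
  intro x hx y hy hxy
  simp only [swap_apply_def]
  rw [Fin.lt_def] at hxy ⊢
  split_ifs <;> simp_all [Fin.ext_iff] <;> omega

theorem Finset.compl_map_equiv {α β : Type*} [Fintype α] [Fintype β] [DecidableEq α]
    [DecidableEq β] (g : α ≃ β) (I : Finset α) : (I.map g.toEmbedding)ᶜ = Iᶜ.map g.toEmbedding := by
  ext x; simp [mem_map_equiv]

theorem Matrix.det_eq_prod_diag_of_eq_zero_of_le {R ι α : Type*} [CommRing R] [Fintype ι]
    [DecidableEq ι] [LinearOrder α] (M : Matrix ι ι R) (b : ι → α)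
    (h : ∀ i j, i ≠ j → b i ≤ b j → M i j = 0) : M.det = ∏ i, M i i := by
  -- `M` is upper triangular for the linear order refining `b` reversed, ties broken by `equivFin`.
  let key : ι → Lex (αᵒᵈ × Fin (Fintype.card ι)) :=
    fun i => toLex (OrderDual.toDual (b i), Fintype.equivFin ι i)
  have hkey : Function.Injective key := fun i j hij =>
    (Fintype.equivFin ι).injective (congrArg (fun z => (ofLex z).2) hij)
  let : LinearOrder ι := LinearOrder.lift' key hkey
  convert Matrix.det_of_isUpperTriangular (M := M) fun i j hji => h i j (ne_of_gt hji) ?_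
  have : key j < key i := hji
  rcases Prod.Lex.lt_iff.mp this with h' | ⟨h', _⟩
  · exact h'.le
  · exact (congrArg OrderDual.ofDual h').ge

theorem Matrix.det_submatrix_eq_zero_of_not_injective {R ι κ : Type*} [CommRing R] [Fintype ι]
    [DecidableEq ι] (A : Matrix ι κ R) {c : ι → κ} (hc : ¬Function.Injective c) :
    (A.submatrix id c).det = 0 := by
  obtain ⟨i, j, hij, hne⟩ : ∃ i j, c i = c j ∧ i ≠ j := by
    simpa [Function.Injective] using hc
  exact Matrix.det_zero_of_column_eq hne fun k => by simp [hij]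

section Minor

variable {R : Type*} [CommRing R] {N M : ℕ}

theorem minor_eq_det (A : Matrix (Fin N) (Fin M) R) {I : Finset (Fin N)} {J : Finset (Fin M)}
    {k : ℕ} (hI : I.card = k) (hJ : J.card = k) :
    minor A I J = (A.submatrix (I.orderEmbOfFin hI) (J.orderEmbOfFin hJ)).det := by
  subst hI
  rw [minor, dif_pos hJ]

theorem minor_univ_eq_det (A : Matrix (Fin N) (Fin M) R) {L : Finset (Fin M)} (hL : L.card = N) :
    minor A univ L = (A.submatrix id (L.orderEmbOfFin hL)).det := by
  rw [minor_eq_det A (card_fin N) hL, ← orderEmbOfFin_unique (card_fin N) (fun _ => mem_univ _)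
    strictMono_id]

theorem exists_det_submatrix_eq_units_mul_minor (A : Matrix (Fin N) (Fin M) R)
    {c : Fin N → Fin M} (hc : Function.Injective c) :
    ∃ u : ℤˣ, (A.submatrix id c).det = u * minor A univ (univ.image c) := by
  have hL : (univ.image c).card = N := by rw [card_image_of_injective _ hc, card_fin]
  let σ : Perm (Fin N) := Equiv.ofBijective
    (fun y => ((univ.image c).orderIsoOfFin hL).symm ⟨c y, mem_image_of_mem c (mem_univ y)⟩)
    (Finite.injective_iff_bijective.mp fun x y h => hc <| by simpa using h)
  have hσ : c = (univ.image c).orderEmbOfFin hL ∘ σ := by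
    ext y; simp [σ, ← coe_orderIsoOfFin_apply]
  refine ⟨Perm.sign σ, ?_⟩
  rw [minor_univ_eq_det A hL, ← Matrix.det_permute']
  conv_lhs => rw [hσ]
  rfl

end Minor

section Laplace

variable {R : Type*} [CommRing R] {m n r : ℕ}

theorem card_compl_of_card_eq (hm : n + r = m) {I : Finset (Fin m)} (hI : I.card = n) :
    Iᶜ.card = r := by
  rw [card_compl, hI, Fintype.card_fin]; omega

variable (hm : n + r = m)

def sumEquivOfAddEq : Fin n ⊕ Fin r ≃ Fin m :=
  finSumFinEquiv.trans (finCongr hm)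

@[simp]
theorem sumEquivOfAddEq_inl_val (j : Fin n) :
    (sumEquivOfAddEq hm (.inl j) : ℕ) = j := rfl

@[simp]
theorem sumEquivOfAddEq_inr_val (j : Fin r) :
    (sumEquivOfAddEq hm (.inr j) : ℕ) = n + j := rfl

def shuffleEquiv (I : Finset (Fin m)) (hI : I.card = n) : Fin n ⊕ Fin r ≃ Fin m :=
  (sumCongr (I.orderIsoOfFin hI).toEquiv
    ((Iᶜ.orderIsoOfFin (card_compl_of_card_eq hm hI)).toEquiv.trans
      (subtypeEquivRight fun _ => mem_compl))).trans (sumCompl (· ∈ I))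

@[simp]
theorem shuffleEquiv_inl (I : Finset (Fin m)) (hI : I.card = n) (j : Fin n) :
    shuffleEquiv hm I hI (.inl j) = I.orderEmbOfFin hI j := rfl

@[simp]
theorem shuffleEquiv_inr (I : Finset (Fin m)) (hI : I.card = n) (j : Fin r) :
    shuffleEquiv hm I hI (.inr j) = Iᶜ.orderEmbOfFin (card_compl_of_card_eq hm hI) j := rfl

def shufflePerm (I : Finset (Fin m)) (hI : I.card = n) : Perm (Fin m) :=
  (sumEquivOfAddEq hm).symm.trans (shuffleEquiv hm I hI)

theorem shuffleEquiv_map (I : Finset (Fin m)) (hI : I.card = n)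
    (g : Perm (Fin m)) (hgI : StrictMonoOn g I) (hgIc : StrictMonoOn g ↑Iᶜ)
    (hI' : (I.map g.toEmbedding).card = n) :
    shuffleEquiv hm (I.map g.toEmbedding) hI' = (shuffleEquiv hm I hI).trans g := by
  ext (j | j)
  · simp only [shuffleEquiv_inl, trans_apply]
    rw [orderEmbOfFin_apply_of_eq_map g.toEmbedding hgI rfl]
    rfl
  · simp only [shuffleEquiv_inr, trans_apply]
    rw [orderEmbOfFin_apply_of_eq_map g.toEmbedding hgIc (compl_map_equiv g I)]
    rfl

theorem sign_shufflePerm_map_swap (I : Finset (Fin m)) (hI : I.card = n)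
    {b a : Fin m} (hab : (b : ℕ) + 1 = a) (hb : b ∈ I) (ha : a ∉ I)
    (hI' : (I.map (swap b a).toEmbedding).card = n) :
    Perm.sign (shufflePerm hm (I.map (swap b a).toEmbedding) hI') =
      -Perm.sign (shufflePerm hm I hI) := by
  have hba : b ≠ a := fun h => by simp [h] at hab
  have hmono : ∀ s : Finset (Fin m), ¬(b ∈ s ∧ a ∈ s) → StrictMonoOn (swap b a) ↑s :=
    fun s hs => strictMonoOn_swap_of_val_add_one_eq hab (by simpa using hs)
  have h : shufflePerm hm (I.map (swap b a).toEmbedding) hI' = swap b a * shufflePerm hm I hI := by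
    rw [shufflePerm, shuffleEquiv_map hm I hI _ (hmono I (by tauto))
      (hmono Iᶜ (by simp [hb]))]
    rfl
  rw [h, Perm.sign_mul, Perm.sign_swap hba, neg_one_mul]

theorem sum_map_swap_val_add_one (I : Finset (Fin m)) {b a : Fin m} (hab : (b : ℕ) + 1 = a)
    (hb : b ∈ I) (ha : a ∉ I) :
    ∑ x ∈ I.map (swap b a).toEmbedding, ((x : ℕ) + 1) = ∑ x ∈ I, ((x : ℕ) + 1) + 1 := by
  have hfix : ∀ x ∈ I.erase b, swap b a x = x := fun x hx =>
    swap_apply_of_ne_of_ne (ne_of_mem_erase hx) fun h => ha (h ▸ mem_of_mem_erase hx)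
  rw [sum_map, ← add_sum_erase _ _ hb, ← add_sum_erase _ _ hb,
    sum_congr rfl fun x hx => by rw [toEmbedding_apply, hfix x hx]]
  simp only [toEmbedding_apply, swap_apply_left]
  omega

theorem vSign_map_swap (I : Finset (Fin m)) {b a : Fin m} (hab : (b : ℕ) + 1 = a)
    (hb : b ∈ I) (ha : a ∉ I) : vSign n (I.map (swap b a).toEmbedding) = -vSign n I := by
  rw [vSign, vSign, sum_map_swap_val_add_one I hab hb ha, add_right_comm, pow_succ, mul_neg_one]

def initialSeg (m n : ℕ) : Finset (Fin m) := univ.filter fun x => (x : ℕ) < n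

@[simp]
theorem mem_initialSeg {x : Fin m} : x ∈ initialSeg m n ↔ (x : ℕ) < n := by
  simp [initialSeg]

theorem card_initialSeg (h : n ≤ m) : (initialSeg m n).card = n := by
  rw [initialSeg, Fin.card_filter_val_lt, min_eq_right h]

theorem shuffleEquiv_initialSeg (h : (initialSeg m n).card = n) :
    shuffleEquiv hm (initialSeg m n) h = sumEquivOfAddEq hm := by
  ext (j | j) <;> simp only [shuffleEquiv_inl, shuffleEquiv_inr]
  · rw [← orderEmbOfFin_unique h (f := fun j => sumEquivOfAddEq hm (.inl j))
      (by simp) fun i j hij => by rw [Fin.lt_def] at hij ⊢; simpa using hij]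
  · rw [← orderEmbOfFin_unique (card_compl_of_card_eq hm h)
      (f := fun j => sumEquivOfAddEq hm (.inr j))
      (by simp) fun i j hij => by rw [Fin.lt_def] at hij ⊢; simpa using hij]

theorem vSign_initialSeg (h : n ≤ m) : vSign n (initialSeg m n) = 1 := by
  have hrange : (initialSeg m n).map Fin.valEmbedding = range n := by
    ext i; simp only [mem_map, mem_initialSeg, Fin.valEmbedding_apply, mem_range]
    exact ⟨fun ⟨x, hx, hxi⟩ => hxi ▸ hx, fun hi => ⟨⟨i, by omega⟩, hi, rfl⟩⟩
  have hsum : ∑ x ∈ initialSeg m n, ((x : ℕ) + 1) = n * (n + 1) / 2 := by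
    have := sum_map (initialSeg m n) Fin.valEmbedding (· + 1)
    rw [Fin.valEmbedding_apply] at this
    have gauss := sum_range_succ' (fun x => x) n
    rw [sum_range_id, Nat.add_sub_cancel, add_zero] at gauss
    rw [← this, hrange, ← gauss, mul_comm]
  rw [vSign, hsum, ← two_mul, pow_mul, neg_one_sq, one_pow]

theorem exists_val_add_one_eq_of_ne_initialSeg {I : Finset (Fin m)} (hI : I.card = n)
    (hne : I ≠ initialSeg m n) : ∃ b a : Fin m, (b : ℕ) + 1 = a ∧ b ∉ I ∧ a ∈ I := by
  have hnm : n ≤ m := hI ▸ card_le_univ I |>.trans_eq (Fintype.card_fin m)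
  obtain ⟨j, hj, hjI⟩ : ∃ j : Fin m, (j : ℕ) < n ∧ j ∉ I := by
    by_contra! h
    exact hne (eq_of_subset_of_card_le (fun x hx => h x (mem_initialSeg.mp hx))
      (by rw [hI, card_initialSeg hnm])).symm
  have hS : (I.filter (j < ·)).Nonempty := by
    by_contra! h
    rw [filter_eq_empty_iff] at h
    have : I ⊆ Iio j := fun x hx =>
      mem_Iio.mpr <| lt_of_le_of_ne (not_lt.mp (h hx)) fun hxj => hjI (hxj ▸ hx)
    have := card_le_card this
    rw [hI, Fin.card_Iio] at this
    omega
  -- the least element `a` of `I` above the gap `j` has its predecessor outside `I`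
  obtain ⟨haI, hja⟩ := mem_filter.mp (min'_mem _ hS)
  have hmin := fun x hx => min'_le (I.filter (j < ·)) x hx
  set a := (I.filter (j < ·)).min' hS
  rw [Fin.lt_def] at hja
  refine ⟨⟨a - 1, by omega⟩, a, by simp only; omega, fun hb => ?_, haI⟩
  have hjb : (j : ℕ) < a - 1 :=
    lt_of_le_of_ne (by omega) fun h => hjI (by convert hb)
  have := hmin _ (mem_filter.mpr ⟨hb, Fin.lt_def.mpr hjb⟩)
  rw [Fin.le_def] at this
  simp only at this
  omega

theorem shufflePerm_congr {I J : Finset (Fin m)} (h : I = J)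
    (hI : I.card = n) (hJ : J.card = n) : shufflePerm hm I hI = shufflePerm hm J hJ := by
  subst h; rfl

theorem sign_shufflePerm (I : Finset (Fin m)) (hI : I.card = n) :
    (Perm.sign (shufflePerm hm I hI) : ℤ) = vSign n I := by
  induction hw : ∑ x ∈ I, ((x : ℕ) + 1) using Nat.strong_induction_on generalizing I with
  | _ w ih =>
  by_cases h₀ : I = initialSeg m n
  · subst h₀
    rw [shufflePerm, shuffleEquiv_initialSeg, symm_trans_self, Perm.sign_refl, Units.val_one,
      vSign_initialSeg (by omega)]
  obtain ⟨b, a, hab, hb, ha⟩ := exists_val_add_one_eq_of_ne_initialSeg hI h₀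
  set I' := I.map (swap b a).toEmbedding
  have hback : I'.map (swap b a).toEmbedding = I := by
    ext x; simp [I']
  have hb' : b ∈ I' := mem_map_equiv.mpr (by rwa [symm_swap, swap_apply_left])
  have ha' : a ∉ I' := fun h => hb (by simpa using mem_map_equiv.mp h)
  have hI' : I'.card = n := (card_map _).trans hI
  have hlt := sum_map_swap_val_add_one I' hab hb' ha'
  rw [hback, hw] at hlt
  rw [shufflePerm_congr hm hback.symm hI (hback.symm ▸ hI),
    sign_shufflePerm_map_swap hm I' hI' hab hb' ha', ← hback, vSign_map_swap I' hab hb' ha',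
    ← ih _ (by omega) I' hI' rfl]
  push_cast
  rfl

def shuffleSumCongr (I : Finset (Fin m)) (hI : I.card = n)
    (τ₁ : Perm (Fin n)) (τ₂ : Perm (Fin r)) : Perm (Fin m) :=
  (sumEquivOfAddEq hm).symm.trans ((sumCongr τ₁ τ₂).trans (shuffleEquiv hm I hI))

@[simp]
theorem shuffleSumCongr_inl (I : Finset (Fin m)) (hI : I.card = n)
    (τ₁ : Perm (Fin n)) (τ₂ : Perm (Fin r)) (j : Fin n) :
    shuffleSumCongr hm I hI τ₁ τ₂ (sumEquivOfAddEq hm (.inl j)) = I.orderEmbOfFin hI (τ₁ j) := by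
  simp [shuffleSumCongr]

@[simp]
theorem shuffleSumCongr_inr (I : Finset (Fin m)) (hI : I.card = n)
    (τ₁ : Perm (Fin n)) (τ₂ : Perm (Fin r)) (j : Fin r) :
    shuffleSumCongr hm I hI τ₁ τ₂ (sumEquivOfAddEq hm (.inr j)) =
      Iᶜ.orderEmbOfFin (card_compl_of_card_eq hm hI) (τ₂ j) := by
  simp [shuffleSumCongr]

theorem sign_shuffleSumCongr (I : Finset (Fin m)) (hI : I.card = n)
    (τ₁ : Perm (Fin n)) (τ₂ : Perm (Fin r)) :
    (Perm.sign (shuffleSumCongr hm I hI τ₁ τ₂) : ℤ) =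
      vSign n I * (Perm.sign τ₁ * Perm.sign τ₂ : ℤˣ) := by
  have : shuffleSumCongr hm I hI τ₁ τ₂ =
      shufflePerm hm I hI * (sumEquivOfAddEq hm).permCongr (sumCongr τ₁ τ₂) := by
    ext x; simp [shuffleSumCongr, shufflePerm, permCongr_apply]
  rw [this, Perm.sign_mul, Perm.sign_permCongr, Perm.sign_sumCongr, Units.val_mul,
    sign_shufflePerm]

theorem mem_iff_exists_shuffleSumCongr_inl {I : Finset (Fin m)}
    (hI : I.card = n) (τ₁ : Perm (Fin n)) (τ₂ : Perm (Fin r)) (x : Fin m) :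
    x ∈ I ↔ ∃ j, shuffleSumCongr hm I hI τ₁ τ₂ (sumEquivOfAddEq hm (.inl j)) = x := by
  simp only [shuffleSumCongr_inl]
  constructor
  · intro hx
    obtain ⟨k, rfl⟩ : x ∈ Set.range (I.orderEmbOfFin hI) := by rwa [range_orderEmbOfFin]
    exact ⟨τ₁.symm k, by simp⟩
  · rintro ⟨j, rfl⟩
    exact orderEmbOfFin_mem _ _ _

theorem shuffleSumCongr_bijective :
    Function.Bijective fun x : Σ _ : {I : Finset (Fin m) // I.card = n},
      Perm (Fin n) × Perm (Fin r) => shuffleSumCongr hm x.1.1 x.1.2 x.2.1 x.2.2 := by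
  rw [Fintype.bijective_iff_injective_and_card]
  constructor
  · rintro ⟨⟨I, hI⟩, τ₁, τ₂⟩ ⟨⟨J, hJ⟩, σ₁, σ₂⟩ h
    simp only at h
    obtain rfl : I = J := by
      ext x
      rw [mem_iff_exists_shuffleSumCongr_inl hm hI τ₁ τ₂, h,
        ← mem_iff_exists_shuffleSumCongr_inl hm hJ σ₁ σ₂]
    have h₁ : τ₁ = σ₁ := by
      ext j : 1
      have := congrFun (congrArg DFunLike.coe h) (sumEquivOfAddEq hm (.inl j))
      simpa using this
    have h₂ : τ₂ = σ₂ := by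
      ext j : 1
      have := congrFun (congrArg DFunLike.coe h) (sumEquivOfAddEq hm (.inr j))
      simpa using this
    rw [h₁, h₂]
  · simp only [Fintype.card_sigma, Fintype.card_prod, Fintype.card_perm, Fintype.card_fin,
      sum_const, card_univ, Fintype.card_finset_len, smul_eq_mul]
    rw [← Nat.choose_mul_factorial_mul_factorial (show n ≤ m by omega),
      show m - n = r by omega, mul_assoc]

theorem det_eq_sum_vSign_mul_det_mul_det (B : Matrix (Fin m) (Fin n ⊕ Fin r) R) :
    (B.submatrix id (sumEquivOfAddEq hm).symm).det =
      ∑ I : {I : Finset (Fin m) // I.card = n}, (vSign n I.1 : R) *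
        ((B.submatrix (I.1.orderEmbOfFin I.2) Sum.inl).det *
          (B.submatrix (I.1ᶜ.orderEmbOfFin (card_compl_of_card_eq hm I.2)) Sum.inr).det) := by
  rw [Matrix.det_apply', ← Fintype.sum_bijective _ (shuffleSumCongr_bijective hm) _ _
    fun _ => rfl, ← univ_sigma_univ, sum_sigma]
  refine sum_congr rfl fun ⟨I, hI⟩ _ => ?_
  rw [Fintype.sum_prod_type, Matrix.det_apply', Matrix.det_apply', sum_mul_sum, mul_sum]
  refine sum_congr rfl fun τ₁ _ => ?_
  rw [mul_sum]
  refine sum_congr rfl fun τ₂ _ => ?_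
  rw [← (sumEquivOfAddEq hm).prod_comp, Fintype.prod_sum_type]
  simp only [Matrix.submatrix_apply, id_eq, symm_apply_apply, shuffleSumCongr_inl,
    shuffleSumCongr_inr, sign_shuffleSumCongr, Units.val_mul]
  push_cast
  ring

end Laplace

section ConcatCols

variable {M m n r : ℕ} (hm : n + r = m) {J K : Finset (Fin M)} (hJ : J.card = n)
  (hK : K.card = r)

def concatCols : Fin m → Fin M :=
  Sum.elim (J.orderEmbOfFin hJ) (K.orderEmbOfFin hK) ∘ (sumEquivOfAddEq hm).symm

theorem image_concatCols : univ.image (concatCols hm hJ hK) = J ∪ K := by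
  apply coe_injective
  rw [coe_image, coe_univ, Set.image_univ, concatCols, EquivLike.range_comp, Set.Sum.elim_range,
    range_orderEmbOfFin, range_orderEmbOfFin, coe_union]

theorem concatCols_injective_iff : Function.Injective (concatCols hm hJ hK) ↔ Disjoint J K := by
  rw [concatCols, EquivLike.injective_comp, Sum.elim_injective, ← disjoint_coe,
    ← range_orderEmbOfFin J hJ, ← range_orderEmbOfFin K hK, Set.disjoint_range_iff]
  simp only [(orderEmbOfFin _ _).injective, true_and]

end ConcatCols

section Compositions

variable {s n : ℕ}

theorem mem_iotaSet_finProdFinEquiv {μ : Fin s → ℕ} {i : Fin s} {v : Fin n} :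
    finProdFinEquiv (i, v) ∈ iotaSet s n μ ↔ (v : ℕ) < μ i := by
  have hn : 0 < n := v.pos
  simp [iotaSet, Nat.add_mul_div_left, Nat.div_eq_of_lt v.isLt, Nat.mod_eq_of_lt v.isLt, hn]

theorem mem_phiSet_finProdFinEquiv {k : Fin s} {μ : Fin s → ℕ} {i : Fin s} {v : Fin n} :
    finProdFinEquiv (i, v) ∈ phiSet s n k μ ↔ i ≠ k ∧ (v : ℕ) = μ i := by
  have hn : 0 < n := v.pos
  simp [phiSet, Nat.add_mul_div_left, Nat.div_eq_of_lt v.isLt, Nat.mod_eq_of_lt v.isLt, hn,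
    Fin.val_ne_iff]

theorem iotaSet_eq_map (μ : Fin s → ℕ) :
    iotaSet s n μ = (univ.filter fun p : Fin s × Fin n => (p.2 : ℕ) < μ p.1).map
      finProdFinEquiv.toEmbedding := by
  ext x
  obtain ⟨⟨i, v⟩, rfl⟩ := finProdFinEquiv.surjective x
  simp [mem_iotaSet_finProdFinEquiv]

theorem phiSet_eq_map (k : Fin s) (μ : Fin s → ℕ) :
    phiSet s n k μ = (univ.filter fun p : Fin s × Fin n => p.1 ≠ k ∧ (p.2 : ℕ) = μ p.1).map
      finProdFinEquiv.toEmbedding := by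
  ext x
  obtain ⟨⟨i, v⟩, rfl⟩ := finProdFinEquiv.surjective x
  simp [mem_phiSet_finProdFinEquiv]

theorem le_of_mem_antidiagonalTuple {μ : Fin s → ℕ} (hμ : μ ∈ Nat.antidiagonalTuple s n)
    (i : Fin s) : μ i ≤ n :=
  (Nat.mem_antidiagonalTuple.mp hμ) ▸ single_le_sum (fun _ _ => Nat.zero_le _) (mem_univ i)

theorem lt_of_mem_antidiagonalTuple_of_ne (hn : 0 < n) {μ : Fin s → ℕ}
    (hμ : μ ∈ Nat.antidiagonalTuple s n) {k : Fin s} (hk : ∀ l, μ l ≤ μ k) {i : Fin s}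
    (hi : i ≠ k) : μ i < n := by
  have := sum_le_univ_sum_of_nonneg (s := {i, k}) (f := μ) fun _ => Nat.zero_le _
  rw [sum_pair hi, Nat.mem_antidiagonalTuple.mp hμ] at this
  have := hk i
  omega

theorem card_iotaSet {μ : Fin s → ℕ} (hμ : μ ∈ Nat.antidiagonalTuple s n) :
    (iotaSet s n μ).card = n := by
  rw [iotaSet_eq_map, card_map, card_filter, Fintype.sum_prod_type]
  simp_rw [← card_filter, Fin.card_filter_val_lt, min_eq_right (le_of_mem_antidiagonalTuple hμ _)]
  exact Nat.mem_antidiagonalTuple.mp hμ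

theorem card_phiSet {k : Fin s} {μ : Fin s → ℕ} (hlt : ∀ i, i ≠ k → μ i < n) :
    (phiSet s n k μ).card = s - 1 := by
  have hs : (univ.erase k).card = s - 1 := by rw [card_erase_of_mem (mem_univ k), card_fin]
  rw [phiSet_eq_map, card_map, ← hs]
  refine card_bij (fun p _ => p.1) (fun p hp => by simp_all) (fun p hp q hq hpq => ?_)
    fun i hi => ⟨(i, ⟨μ i, hlt i (ne_of_mem_erase hi)⟩), by simpa using ne_of_mem_erase hi, rfl⟩
  simp only [mem_filter, mem_univ, true_and] at hp hq
  exact Prod.ext hpq (Fin.ext (by rw [hp.2, hq.2, hpq]))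

theorem disjoint_iotaSet_phiSet (k : Fin s) (μ : Fin s → ℕ) :
    Disjoint (iotaSet s n μ) (phiSet s n k μ) := by
  rw [iotaSet_eq_map, phiSet_eq_map, disjoint_map, disjoint_filter]
  intro p _ h₁ h₂
  omega

theorem not_disjoint_iotaSet_phiSet {lam μ : Fin s → ℕ} (hlam : lam ∈ Nat.antidiagonalTuple s n)
    (hμ : μ ∈ Nat.antidiagonalTuple s n) {k : Fin s} (hk : ∀ l, μ l ≤ μ k) (hne : lam ≠ μ)
    (hsup : univ.sup lam ≤ univ.sup μ) : ¬Disjoint (iotaSet s n lam) (phiSet s n k μ) := by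
  intro hd
  have hle : ∀ i, lam i ≤ μ i := by
    intro i
    rcases eq_or_ne i k with rfl | hik
    · exact (le_sup (mem_univ i)).trans (hsup.trans (Finset.sup_le fun l _ => hk l))
    by_contra! hgt
    have hv : μ i < n := hgt.trans_le (le_of_mem_antidiagonalTuple hlam i)
    exact disjoint_left.mp hd (mem_iotaSet_finProdFinEquiv (v := ⟨μ i, hv⟩) |>.mpr hgt)
      (mem_phiSet_finProdFinEquiv.mpr ⟨hik, rfl⟩)
  refine hne (funext fun i => (sum_eq_sum_iff_of_le fun i _ => hle i).mp ?_ i (mem_univ i))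
  rw [Nat.mem_antidiagonalTuple.mp hlam, Nat.mem_antidiagonalTuple.mp hμ]

end Compositions

section InnerProduct

variable {R : Type*} [CommRing R] {s n : ℕ}

theorem innerVV_eq_det_concatCols (hs : 0 < s)
    (A : Matrix (Fin (s + n - 1)) (Fin (s * n)) R) {J K : Finset (Fin (s * n))}
    (hJ : J.card = n) (hK : K.card = s - 1) :
    innerVV A J K = (A.submatrix id (concatCols (by omega) hJ hK)).det := by
  rw [show A.submatrix id (concatCols _ hJ hK) = (A.submatrix id (Sum.elim (J.orderEmbOfFin hJ)
    (K.orderEmbOfFin hK))).submatrix id (sumEquivOfAddEq (by omega)).symm from rfl,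
    det_eq_sum_vSign_mul_det_mul_det, innerVV]
  refine sum_congr rfl fun I _ => ?_
  rw [minor_eq_det A I.2 hJ, minor_eq_det A (card_compl_of_card_eq (by omega) I.2) hK]
  simp only [Matrix.submatrix_submatrix, Function.id_comp, Sum.elim_comp_inl, Sum.elim_comp_inr]
  ring

theorem innerVV_iotaSet_phiSet_eq_zero (hs : 0 < s) (hn : 0 < n)
    (A : Matrix (Fin (s + n - 1)) (Fin (s * n)) R) {lam μ : Fin s → ℕ}
    (hlam : lam ∈ Nat.antidiagonalTuple s n) (hμ : μ ∈ Nat.antidiagonalTuple s n) {k : Fin s}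
    (hk : ∀ l, μ l ≤ μ k) (hne : lam ≠ μ) (hsup : univ.sup lam ≤ univ.sup μ) :
    innerVV A (iotaSet s n lam) (phiSet s n k μ) = 0 := by
  rw [innerVV_eq_det_concatCols hs A (card_iotaSet hlam)
    (card_phiSet fun i => lt_of_mem_antidiagonalTuple_of_ne hn hμ hk)]
  refine Matrix.det_submatrix_eq_zero_of_not_injective A ?_
  rw [concatCols_injective_iff]
  exact not_disjoint_iotaSet_phiSet hlam hμ hk hne hsup

theorem exists_innerVV_iotaSet_phiSet_eq_units_mul_minor (hs : 0 < s) (hn : 0 < n)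
    (A : Matrix (Fin (s + n - 1)) (Fin (s * n)) R) {μ : Fin s → ℕ}
    (hμ : μ ∈ Nat.antidiagonalTuple s n) {k : Fin s} (hk : ∀ l, μ l ≤ μ k) :
    ∃ u : ℤˣ, innerVV A (iotaSet s n μ) (phiSet s n k μ) =
      u * minor A univ (iotaSet s n μ ∪ phiSet s n k μ) := by
  rw [innerVV_eq_det_concatCols hs A (card_iotaSet hμ)
    (card_phiSet fun i => lt_of_mem_antidiagonalTuple_of_ne hn hμ hk), ← image_concatCols]
  exact exists_det_submatrix_eq_units_mul_minor A
    ((concatCols_injective_iff _ _ _).mpr (disjoint_iotaSet_phiSet k μ))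

end InnerProduct

/-- with `π(μ)` the least index of a maximal part and
`Φ(μ) = φ^{(π(μ))}(μ)`, the matrix `(⟨V_{ι(λ)}(A), V̄_{Φ(μ)}(A)⟩)_{λ,μ}` is
block (upper) triangular for the filtration by the maximal part, and its
determinant is `± ∏_{μ ∈ Z_{s,n}} det A_{ι(μ) ⊔ Φ(μ)}`. -/
theorem det_inner_matrix (s n : ℕ) (hs : 0 < s) (hn : 0 < n)
    {R : Type*} [CommRing R] (A : Matrix (Fin (s + n - 1)) (Fin (s * n)) R)
    (p : (Fin s → ℕ) → Fin s)
    (hp : ∀ μ ∈ Finset.Nat.antidiagonalTuple s n,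
      (∀ l, μ l ≤ μ (p μ)) ∧ ∀ k' : Fin s, (∀ l, μ l ≤ μ k') → p μ ≤ k')
    (Φ : (Fin s → ℕ) → Finset (Fin (s * n)))
    (hΦ : ∀ μ ∈ Finset.Nat.antidiagonalTuple s n, Φ μ = phiSet s n (p μ) μ) :
    (∀ lam μ : Comp s n, lam ≠ μ →
      (Finset.univ.sup lam.1 ≤ Finset.univ.sup μ.1) →
      innerVV A (iotaSet s n lam.1) (Φ μ.1) = 0) ∧
    ∃ e : ℤ, (e = 1 ∨ e = -1) ∧
      Matrix.det (Matrix.of fun lam μ : Comp s n =>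
          innerVV A (iotaSet s n lam.1) (Φ μ.1))
        = ((e : ℤ) : R) * ∏ μ ∈ Finset.Nat.antidiagonalTuple s n,
            minor A Finset.univ (iotaSet s n μ ∪ Φ μ) := by
  have hmax (μ : Comp s n) := (hp μ.1 μ.2).1
  have hzero (lam μ : Comp s n) (hne : lam ≠ μ) (hsup : univ.sup lam.1 ≤ univ.sup μ.1) :
      innerVV A (iotaSet s n lam.1) (Φ μ.1) = 0 := by
    rw [hΦ μ.1 μ.2]
    exact innerVV_iotaSet_phiSet_eq_zero hs hn A lam.2 μ.2 (hmax μ)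
      (Subtype.coe_ne_coe.mpr hne) hsup
  have hdiag (μ : Comp s n) : ∃ u : ℤˣ, innerVV A (iotaSet s n μ.1) (Φ μ.1) =
      u * minor A univ (iotaSet s n μ.1 ∪ Φ μ.1) := by
    rw [hΦ μ.1 μ.2]
    exact exists_innerVV_iotaSet_phiSet_eq_units_mul_minor hs hn A μ.2 (hmax μ)
  choose u hu using hdiag
  refine ⟨hzero, ((∏ μ, u μ : ℤˣ) : ℤ), Int.isUnit_iff.mp (Units.isUnit _), ?_⟩
  rw [Matrix.det_eq_prod_diag_of_eq_zero_of_le _ (fun μ : Comp s n => univ.sup μ.1)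
    fun lam μ hne hsup => by exact hzero lam μ hne hsup]
  simp only [Matrix.of_apply, hu, prod_mul_distrib, Units.coe_prod, Int.cast_prod]
  rw [prod_coe_sort (Nat.antidiagonalTuple s n) fun μ => minor A univ (iotaSet s n μ ∪ Φ μ)]
end

section
/- Monomial identity: ∏_{ν ∈ Z^0_{s,s+n−1}} x_{ι(ν)}^{s+n−[s+n−1]} = ∏_{k=1}^{s} ∏_{j=1}^{n} x_{(k−1)n+j}^{(s+1−k)·binom(s+n−j, s)}, where for J = {j_1 < … < j_{s+n−1}}, x_J^{s+n−[s+n−1]} = x_{j_1}^{s+n−1} x_{j_2}^{s+n−2} ⋯ x_{j_{s+n−1}}. -/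
open Finset

/-- The exponent vector of the monomial `x_J^{s+n−I} = ∏_p x_{j_p}^{s+n−i_p}`
(with `I`, `J` listed increasingly; junk `0` if the sizes differ). -/
noncomputable def Dvec (s n : ℕ) (I : Finset (Fin (s + n - 1)))
    (J : Finset (Fin (s * n))) : Fin (s * n) →₀ ℕ :=
  if h : J.card = I.card then
    ∑ p : Fin I.card,
      Finsupp.single (J.orderEmbOfFin h p) ((s + n - 1) - (I.orderEmbOfFin rfl p : ℕ))
  else 0

/-- `d` is lexicographically smaller than `D` for `x_1 ≫ x_2 ≫ ⋯`: at the first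
index where they differ, `d` has the smaller exponent. -/
def lexLT {M : ℕ} (d D : Fin M →₀ ℕ) : Prop :=
  ∃ j : Fin M, (∀ i : Fin M, i < j → d i = D i) ∧ d j < D j

/-- The element `(k−1)n + j` of `[sn]` (0-based: `k·n + j`). -/
def finIdx {s n : ℕ} (k : Fin s) (j : Fin n) : Fin (s * n) :=
  ⟨(k : ℕ) * n + (j : ℕ), by
    have h1 : (k : ℕ) * n + (j : ℕ) < ((k : ℕ) + 1) * n := by
      rw [Nat.succ_mul]; exact Nat.add_lt_add_left j.isLt _
    exact lt_of_lt_of_le h1 (Nat.mul_le_mul_right n k.isLt)⟩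

/-- The exponent vector of `∏_{k=1}^s ∏_{j=1}^n x_{(k−1)n+j}^{(s+1−k)·C(s+n−j, s)}`. -/
noncomputable def Dstar (s n : ℕ) : Fin (s * n) →₀ ℕ :=
  ∑ k : Fin s, ∑ j : Fin n,
    Finsupp.single (finIdx k j) ((s - (k : ℕ)) * (s + n - 1 - (j : ℕ)).choose s)

/-! With `m = s + n - 1` and indices counted from `0`, the exponent of `x_{kn+j}` in the
monomial of `ι(ν)` is the number of elements of `ι(ν)` that are `≥ kn + j`, namely
`ν_k + ν_{k+1} + ⋯ + ν_{s-1} - j` if `j < ν_k` and `0` otherwise. Lowering `ν_k` by `j` turns the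
sum of these exponents over `ν` into the sum of `ν_k + ⋯ + ν_{s-1}` over the positive
compositions `ν` of `m - j`. Permuting the parts shows that each part has the same total over all
compositions, and that total is `C(m - j, s)` by the hockey-stick identity; hence the exponent
`(s - k) · C(m - j, s)`. -/

theorem Nat.sum_range_choose_eq_choose_succ (m k : ℕ) :
    ∑ b ∈ range m, b.choose k = m.choose (k + 1) := by
  induction m with
  | zero => simp
  | succ m ih => rw [sum_range_succ, ih, Nat.choose_succ_succ', add_comm]

theorem Fin.card_filter_val_lt_and_le {n a b : ℕ} (hb : b ≤ n) (hab : a ≤ b) :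
    #{i : Fin n | (i : ℕ) < b ∧ a ≤ (i : ℕ)} = b - a := by
  have hsplit := card_filter_add_card_filter_not (s := {i : Fin n | (i : ℕ) < b})
    fun i => a ≤ (i : ℕ)
  have hlt : ({i | (i : ℕ) < b ∧ ¬a ≤ (i : ℕ)} : Finset (Fin n)) =
      ({i | (i : ℕ) < a} : Finset (Fin n)) :=
    filter_congr fun i _ => by omega
  rw [filter_filter, filter_filter, hlt, Fin.card_filter_val_lt, Fin.card_filter_val_lt] at hsplit
  omega

theorem Finset.card_filter_orderEmbOfFin_le {α : Type*} [LinearOrder α] (J : Finset α) {c : ℕ}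
    (h : #J = c) (p : Fin c) : #{y ∈ J | J.orderEmbOfFin h p ≤ y} = c - p := by
  have hJ := map_orderEmbOfFin_univ J h
  generalize J.orderEmbOfFin h = e at hJ ⊢
  rw [← hJ, filter_map, card_map]
  simp [filter_le_eq_Ici]

/-- `Z^0_{s,m}`. -/
def posComp (s m : ℕ) : Finset (Fin s → ℕ) :=
  (Nat.antidiagonalTuple s m).filter fun ν => ∀ i, 0 < ν i

section PositiveCompositions

variable {s m : ℕ}

theorem mem_posComp {ν : Fin s → ℕ} : ν ∈ posComp s m ↔ ∑ i, ν i = m ∧ ∀ i, 0 < ν i := by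
  simp [posComp, Nat.mem_antidiagonalTuple]

theorem add_le_of_mem_posComp {ν : Fin s → ℕ} (hν : ν ∈ posComp s m) (i : Fin s) :
    ν i + s ≤ m + 1 := by
  obtain ⟨hsum, hpos⟩ := mem_posComp.1 hν
  have hrest : s - 1 ≤ ∑ l ∈ univ.erase i, ν l := by
    simpa using card_nsmul_le_sum (univ.erase i) ν 1 fun l _ => hpos l
  have := add_sum_erase univ ν (mem_univ i)
  omega

theorem sum_posComp_comp_perm {M : Type*} [AddCommMonoid M] (σ : Equiv.Perm (Fin s))
    (f : (Fin s → ℕ) → M) : ∑ ν ∈ posComp s m, f (ν ∘ σ) = ∑ ν ∈ posComp s m, f ν := by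
  refine sum_nbij' (· ∘ σ) (· ∘ σ.symm) ?_ ?_ ?_ ?_ fun _ _ => rfl <;>
    simp +contextual [mem_posComp, Function.comp_def, Equiv.sum_comp σ, Equiv.sum_comp σ.symm]

theorem sum_posComp_apply_eq (i i' : Fin s) :
    ∑ ν ∈ posComp s m, ν i = ∑ ν ∈ posComp s m, ν i' := by
  simpa using sum_posComp_comp_perm (m := m) (Equiv.swap i i') (· i')

theorem sum_posComp_succ {M : Type*} [AddCommMonoid M] (f : (Fin (s + 1) → ℕ) → M) :
    ∑ ν ∈ posComp (s + 1) m, f ν =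
      ∑ b ∈ range m, ∑ ν ∈ posComp s b, f (Fin.cons (m - b) ν) := by
  have cons_tail : ∀ ν ∈ posComp (s + 1) m, Fin.cons (m - (m - ν 0)) (Fin.tail ν) = ν := by
    intro ν hν
    have := (mem_posComp.1 hν).1 ▸ Fin.sum_univ_succ ν
    conv_rhs => rw [← Fin.cons_self_tail ν]
    congr 1
    omega
  rw [sum_sigma']
  refine sum_nbij' (fun ν => ⟨m - ν 0, Fin.tail ν⟩) (fun p => Fin.cons (m - p.1) p.2)
    ?_ ?_ cons_tail ?_ fun ν hν => by rw [cons_tail ν hν]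
  · intro ν hν
    obtain ⟨hsum, hpos⟩ := mem_posComp.1 hν
    rw [Fin.sum_univ_succ] at hsum
    have := hpos 0
    simp only [mem_sigma, mem_range, mem_posComp]
    exact ⟨by omega, by simp only [Fin.tail]; omega, fun i => hpos i.succ⟩
  · rintro ⟨b, ν⟩ hp
    simp only [mem_sigma, mem_range, mem_posComp] at hp ⊢
    obtain ⟨hb, hsum, hpos⟩ := hp
    simp only [Fin.sum_univ_succ, Fin.cons_zero, Fin.cons_succ, Fin.forall_fin_succ, hsum]
    exact ⟨by omega, by omega, hpos⟩
  · rintro ⟨b, ν⟩ hp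
    simp only [mem_sigma, mem_range] at hp
    simp only [Fin.cons_zero, Fin.tail_cons, Sigma.mk.injEq, heq_eq_eq, and_true]
    omega

theorem sum_posComp_apply_zero : ∑ ν ∈ posComp (s + 1) m, ν 0 = m.choose (s + 1) := by
  induction s generalizing m with
  | zero => rcases m.eq_zero_or_pos with rfl | hm <;> simp [posComp, filter_singleton, *]
  | succ s ih =>
    -- by symmetry, sum the second part instead: it is the first part of the tail
    rw [sum_posComp_apply_eq 0 1, sum_posComp_succ]
    simp only [show (1 : Fin (s + 2)) = Fin.succ 0 from rfl, Fin.cons_succ, ih]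
    exact Nat.sum_range_choose_eq_choose_succ m (s + 1)

theorem sum_posComp_apply (i : Fin s) : ∑ ν ∈ posComp s m, ν i = m.choose s := by
  obtain ⟨s, rfl⟩ := Nat.exists_eq_add_one_of_ne_zero i.pos.ne'
  rw [sum_posComp_apply_eq i 0, sum_posComp_apply_zero]

theorem sum_posComp_sum_Ici (k : Fin s) :
    ∑ ν ∈ posComp s m, ∑ i ∈ Ici k, ν i = (s - k) * m.choose s := by
  rw [sum_comm, sum_congr rfl fun i _ => sum_posComp_apply i, sum_const, Fin.card_Ici,
    smul_eq_mul]

theorem sum_posComp_filter_lt {M : Type*} [AddCommMonoid M] (k : Fin s) (j : ℕ)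
    (f : (Fin s → ℕ) → M) :
    ∑ ν ∈ posComp s (m + j) with j < ν k, f ν = ∑ ν ∈ posComp s m, f (ν + Pi.single k j) := by
  have sum_add_single (ν : Fin s → ℕ) :
      ∑ i, (ν + Pi.single k j : Fin s → ℕ) i = ∑ i, ν i + j := by
    simp [sum_add_distrib]
  have sub_add_single {ν : Fin s → ℕ} (h : j < ν k) : ν - Pi.single k j + Pi.single k j = ν := by
    ext i
    rcases eq_or_ne i k with rfl | hi <;> simp [*]
    omega
  refine sum_nbij' (· - Pi.single k j) (· + Pi.single k j) ?_ ?_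
    (fun ν hν => sub_add_single (mem_filter.1 hν).2) (fun ν _ => by simp)
    (fun ν hν => by rw [sub_add_single (mem_filter.1 hν).2])
  · intro ν hν
    simp only [mem_filter, mem_posComp] at hν ⊢
    obtain ⟨⟨hsum, hpos⟩, hj⟩ := hν
    have := sum_add_single (ν - Pi.single k j)
    rw [sub_add_single hj] at this
    refine ⟨by omega, fun i => ?_⟩
    rcases eq_or_ne i k with rfl | hi <;> simp [*]
  · intro ν hν
    simp only [mem_filter, mem_posComp] at hν ⊢
    obtain ⟨hsum, hpos⟩ := hν
    refine ⟨⟨by rw [sum_add_single, hsum], fun i => ?_⟩, by simpa using hpos k⟩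
    simpa using Nat.add_pos_left (hpos i) _

end PositiveCompositions

section Grid

variable {s n : ℕ}

theorem finIdx_eq_finProdFinEquiv (k : Fin s) (j : Fin n) :
    finIdx k j = finProdFinEquiv (k, j) := by
  ext
  simp only [finIdx, finProdFinEquiv_apply_val]
  ring

theorem sum_eq_sum_finIdx {M : Type*} [AddCommMonoid M] (f : Fin (s * n) → M) :
    ∑ x, f x = ∑ k, ∑ j, f (finIdx k j) := by
  simp only [finIdx_eq_finProdFinEquiv, ← Fintype.sum_prod_type', Equiv.sum_comp]

theorem finIdx_le_finIdx_iff {k k' : Fin s} {j j' : Fin n} :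
    finIdx k j ≤ finIdx k' j' ↔ k < k' ∨ k = k' ∧ j ≤ j' := by
  simp only [Fin.le_def, Fin.lt_def, Fin.ext_iff, finIdx]
  have hj := j.isLt
  have hj' := j'.isLt
  rcases lt_trichotomy (k : ℕ) k' with h | h | h
  · have := Nat.mul_le_mul_right n h
    simp only [Nat.succ_mul] at this
    omega
  · simp [h]
  · have := Nat.mul_le_mul_right n h
    simp only [Nat.succ_mul] at this
    omega

theorem mem_iotaSet_finIdx (ν : Fin s → ℕ) (k : Fin s) (j : Fin n) :
    finIdx k j ∈ iotaSet s n ν ↔ (j : ℕ) < ν k := by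
  have hdiv : (k * n + j) / n = k := by
    rw [Nat.add_comm, Nat.add_mul_div_right _ _ j.pos, Nat.div_eq_of_lt j.isLt, zero_add]
  have hmod : (k * n + j) % n = j := by
    rw [Nat.add_comm, Nat.add_mul_mod_self_right, Nat.mod_eq_of_lt j.isLt]
  simp [iotaSet, finIdx, hdiv, hmod]

theorem card_iotaSet_s18 {ν : Fin s → ℕ} (hν : ∀ i, ν i ≤ n) : #(iotaSet s n ν) = ∑ i, ν i := by
  rw [← filter_univ_mem (iotaSet s n ν), card_filter, sum_eq_sum_finIdx]
  refine sum_congr rfl fun k _ => ?_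
  simp only [mem_iotaSet_finIdx, ← card_filter, Fin.card_filter_val_lt, min_eq_right (hν k)]

theorem card_filter_iotaSet_finIdx_le {ν : Fin s → ℕ} (hν : ∀ i, ν i ≤ n) {k : Fin s}
    {j : Fin n} (hj : (j : ℕ) < ν k) :
    #{y ∈ iotaSet s n ν | finIdx k j ≤ y} = ∑ i ∈ Ici k, ν i - j := by
  have hblock (k' : Fin s) :
      #{j' : Fin n | (j' : ℕ) < ν k' ∧ (k < k' ∨ k = k' ∧ j ≤ j')} +
          (if k' = k then (j : ℕ) else 0) = if k ≤ k' then ν k' else 0 := by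
    rcases lt_trichotomy k' k with h | rfl | h
    · simp [h.not_ge, h.ne, h.not_gt, h.ne']
    · simp only [lt_self_iff_false, true_and, false_or, Fin.le_def, le_refl, if_true]
      rw [Fin.card_filter_val_lt_and_le (hν _) hj.le]
      omega
    · simp only [h, true_or, and_true, if_pos h.le, if_neg h.ne', add_zero,
        Fin.card_filter_val_lt, min_eq_right (hν k')]
  rw [← filter_univ_mem (iotaSet s n ν), filter_filter, card_filter, sum_eq_sum_finIdx]
  simp only [mem_iotaSet_finIdx, finIdx_le_finIdx_iff, ← card_filter]
  have := sum_congr rfl fun k' (_ : k' ∈ univ) => hblock k'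
  rw [sum_add_distrib, sum_ite_eq', ← sum_filter, filter_le_eq_Ici] at this
  simp only [mem_univ, if_true] at this
  omega

end Grid

theorem Dstar_apply_finIdx {s n : ℕ} (k : Fin s) (j : Fin n) :
    Dstar s n (finIdx k j) = (s - k) * (s + n - 1 - j).choose s := by
  simp only [Dstar, Finsupp.finsetSum_apply, Finsupp.single_apply, finIdx_eq_finProdFinEquiv,
    EmbeddingLike.apply_eq_iff_eq, Prod.mk.injEq, ite_and]
  simp

theorem Dvec_univ_apply {s n : ℕ} {J : Finset (Fin (s * n))} (hJ : #J = s + n - 1)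
    (x : Fin (s * n)) : Dvec s n univ J x = if x ∈ J then #{y ∈ J | x ≤ y} else 0 := by
  have hJ' : #J = #(univ : Finset (Fin (s + n - 1))) := by simpa
  have hval (p : Fin #(univ : Finset (Fin (s + n - 1)))) :
      ((univ : Finset (Fin (s + n - 1))).orderEmbOfFin rfl p : ℕ) = p := by
    have := orderEmbOfFin_unique (s := (univ : Finset (Fin (s + n - 1)))) rfl
      (f := Fin.cast (card_fin _)) (fun _ => mem_univ _) fun _ _ hab => hab
    rw [← this, Fin.val_cast]
  rw [Dvec, dif_pos hJ', Finsupp.finsetSum_apply]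
  split_ifs with hx
  · obtain ⟨q, rfl⟩ : x ∈ Set.range (J.orderEmbOfFin hJ') := by rwa [range_orderEmbOfFin]
    rw [sum_eq_single_of_mem q (mem_univ q) fun p _ hpq =>
        Finsupp.single_eq_of_ne ((J.orderEmbOfFin hJ').injective.ne hpq.symm),
      Finsupp.single_eq_same, hval, card_filter_orderEmbOfFin_le]
    simp
  · refine sum_eq_zero fun p _ => Finsupp.single_eq_of_ne ?_
    rintro rfl
    exact hx (orderEmbOfFin_mem J hJ' p)

theorem Dvec_iotaSet_finIdx {s n : ℕ} {ν : Fin s → ℕ} (hν : ν ∈ posComp s (s + n - 1))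
    (k : Fin s) (j : Fin n) :
    Dvec s n univ (iotaSet s n ν) (finIdx k j) =
      if (j : ℕ) < ν k then ∑ i ∈ Ici k, ν i - j else 0 := by
  have hle (i : Fin s) : ν i ≤ n := by
    have := add_le_of_mem_posComp hν i
    have := i.pos
    omega
  simp only [Dvec_univ_apply (by rw [card_iotaSet_s18 hle, (mem_posComp.1 hν).1]),
    mem_iotaSet_finIdx]
  split_ifs with hj
  · exact card_filter_iotaSet_finIdx_le hle hj
  · rfl

theorem monomial_identity_general (s n : ℕ) :
    (∏ ν ∈ (Finset.Nat.antidiagonalTuple s (s + n - 1)).filter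
        (fun ν => ∀ i, 0 < ν i),
      (MvPolynomial.monomial (Dvec s n Finset.univ (iotaSet s n ν)) (1 : ℚ)))
      = MvPolynomial.monomial (Dstar s n) (1 : ℚ) := by
  rw [← MvPolynomial.monomial_sum_one]
  refine congrArg (MvPolynomial.monomial · 1) (Finsupp.ext fun x => ?_)
  obtain ⟨⟨k, j⟩, rfl⟩ := finProdFinEquiv.surjective x
  rw [← finIdx_eq_finProdFinEquiv, Finsupp.finsetSum_apply, Dstar_apply_finIdx]
  change ∑ ν ∈ posComp s (s + n - 1), _ = _
  obtain ⟨M, hM⟩ : ∃ M, s + n - 1 = M + j := ⟨s + n - 1 - j, by have := k.pos; omega⟩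
  rw [sum_congr rfl fun ν hν => Dvec_iotaSet_finIdx hν k j, ← sum_filter, hM,
    sum_posComp_filter_lt]
  simp only [Pi.add_apply, sum_add_distrib, sum_pi_single', mem_Ici, le_refl, if_true,
    add_tsub_cancel_right]
  exact sum_posComp_sum_Ici k

/-- `∏_{ν ∈ Z^0_{s,s+n−1}} x_{ι(ν)}^{s+n−[s+n−1]}
= ∏_{k=1}^s ∏_{j=1}^n x_{(k−1)n+j}^{(s+1−k)·C(s+n−j,s)}`. -/
theorem monomial_identity (s n : ℕ) (hs : 0 < s) (hn : 0 < n) :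
    (∏ ν ∈ (Finset.Nat.antidiagonalTuple s (s + n - 1)).filter
        (fun ν => ∀ i, 0 < ν i),
      (MvPolynomial.monomial (Dvec s n Finset.univ (iotaSet s n ν)) (1 : ℚ)))
      = MvPolynomial.monomial (Dstar s n) (1 : ℚ) :=
  monomial_identity_general s n
end
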